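/- arXiv:1603.08686 — 2 statements merged into one kernel-verified Lean document; each statement's English description precedes it below -/
import Mathlib

section
/- Let μ be a probability measure with finite support on the power set of 𝒢 and let n ∈ ℕ. Define e_{2n}^det(μ) as the infimum, over all generalized deterministic algorithms (ψ, ν, φ) for S on 𝒢 satisfying ∫_𝒢 ν(g) μ(dg) ≤ 2n, of the average error ∫_𝒢 |S(g) − Ŝ(g)| μ(dg). Then every generalized randomized algorithm for S on 𝒢 with cost at most n has worst-case mean error sup_{g∈𝒢} E|S(g) − Ŝ(g,·)| at least (1/2)·e_{2n}^det(μ). -/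
open MeasureTheory

/-- Sequential observations of a deterministic algorithm. -/
def detObs {A B : Type*} (oracle : A → B) (ψ : List B → A) : ℕ → List B
  | 0 => []
  | k + 1 => detObs oracle ψ k ++ [oracle (ψ (detObs oracle ψ k))]

/-- Sequential observations of a randomized algorithm. -/
def ranObs {A B Ω : Type*} (oracle : A → B) (ψ : List B → Ω → A) (ω : Ω) : ℕ → List B
  | 0 => []
  | k + 1 => ranObs oracle ψ ω k ++ [oracle (ψ (ranObs oracle ψ ω k) ω)]

/-!
Bakhvalov's averaging argument. Average the error and the cost of the randomized algorithm over
`μ`. Their expectations over `ω` are at most the largest mean error `m` on the support of `μ` and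
at most `n`. By the strict Markov inequality each exceeds twice its expectation with probability
`< 1/2`, so the two bad events cannot cover `Ω`: some seed `ω` has `μ`-average error `≤ 2m` and
`μ`-average cost `≤ 2n`, and freezing it gives a deterministic algorithm competing in
`e_{2n}^det(μ)`.
-/

open ENNReal Finset

lemma ranObs_eq_detObs {A B Ω : Type*} (oracle : A → B) (ψ : List B → Ω → A) (ω : Ω) (k : ℕ) :
    ranObs oracle ψ ω k = detObs oracle (fun l => ψ l ω) k := by
  induction k with
  | zero => rfl
  | succ k ih => simp [ranObs, detObs, ih]

section Averaging

variable {Ω : Type*} [MeasurableSpace Ω] {μ : Measure Ω}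

lemma lintegral_ofReal_weighted_sum_le {ι : Type*} {s : Finset ι} {w : ι → ℝ}
    {F : ι → Ω → ℝ} {M : ℝ≥0∞} (hw0 : ∀ i ∈ s, 0 ≤ w i) (hw1 : ∑ i ∈ s, w i = 1)
    (hF0 : ∀ i ∈ s, ∀ ω, 0 ≤ F i ω) (hFm : ∀ i ∈ s, Measurable (F i))
    (hM : ∀ i ∈ s, ∫⁻ ω, ENNReal.ofReal (F i ω) ∂μ ≤ M) :
    ∫⁻ ω, ENNReal.ofReal (∑ i ∈ s, w i * F i ω) ∂μ ≤ M :=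
  calc ∫⁻ ω, ENNReal.ofReal (∑ i ∈ s, w i * F i ω) ∂μ
      = ∫⁻ ω, ∑ i ∈ s, ENNReal.ofReal (w i) * ENNReal.ofReal (F i ω) ∂μ := by
        refine lintegral_congr fun ω => ?_
        rw [ofReal_sum_of_nonneg fun i hi => mul_nonneg (hw0 i hi) (hF0 i hi ω)]
        exact sum_congr rfl fun i hi => ofReal_mul (hw0 i hi)
    _ = ∑ i ∈ s, ENNReal.ofReal (w i) * ∫⁻ ω, ENNReal.ofReal (F i ω) ∂μ := by
        rw [lintegral_finsetSum _ fun i hi => ((hFm i hi).ennreal_ofReal).const_mul _]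
        exact sum_congr rfl fun i hi => lintegral_const_mul _ (hFm i hi).ennreal_ofReal
    _ ≤ ∑ i ∈ s, ENNReal.ofReal (w i) * M := by gcongr with i hi; exact hM i hi
    _ = M := by rw [← sum_mul, ← ofReal_sum_of_nonneg hw0, hw1, ofReal_one, one_mul]

variable [IsProbabilityMeasure μ]

lemma measure_two_mul_lintegral_lt_lt_inv_two {X : Ω → ℝ≥0∞} (hX : Measurable X) :
    μ {ω | 2 * ∫⁻ ω', X ω' ∂μ < X ω} < 2⁻¹ := by
  set x := ∫⁻ ω, X ω ∂μ
  by_cases hx : x = ∞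
  · simp [hx]
  by_contra! hA
  have hA0 : μ {ω | 2 * x < X ω} ≠ 0 := (lt_of_lt_of_le (by simp) hA).ne'
  have : x < x :=
    calc x = 2 * x * 2⁻¹ := by
          rw [mul_comm 2, mul_assoc, ENNReal.mul_inv_cancel two_ne_zero ofNat_ne_top, mul_one]
      _ ≤ 2 * x * μ {ω | 2 * x < X ω} := by gcongr
      _ = ∫⁻ _ in {ω | 2 * x < X ω}, 2 * x ∂μ := (setLIntegral_const _ _).symm
      _ < ∫⁻ ω in {ω | 2 * x < X ω}, X ω ∂μ :=
        setLIntegral_strict_mono (measurableSet_lt measurable_const hX) hA0 hX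
          (by rw [setLIntegral_const]; exact mul_ne_top (by finiteness) (measure_ne_top _ _))
          (ae_of_all _ fun _ h => h)
      _ ≤ x := setLIntegral_le_lintegral _ _
  exact lt_irrefl x this

lemma exists_le_two_mul_lintegral_and_le_two_mul_lintegral {X Y : Ω → ℝ≥0∞}
    (hX : Measurable X) (hY : Measurable Y) :
    ∃ ω, X ω ≤ 2 * ∫⁻ ω', X ω' ∂μ ∧ Y ω ≤ 2 * ∫⁻ ω', Y ω' ∂μ := by
  by_contra! h
  set BX := {ω | 2 * ∫⁻ ω', X ω' ∂μ < X ω}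
  set BY := {ω | 2 * ∫⁻ ω', Y ω' ∂μ < Y ω}
  have hcover : Set.univ ⊆ BX ∪ BY := fun ω _ => (le_or_gt (X ω) _).imp_left (h ω) |>.symm
  have : (1 : ℝ≥0∞) < 1 :=
    calc (1 : ℝ≥0∞) = μ Set.univ := measure_univ.symm
      _ ≤ μ BX + μ BY := (measure_mono hcover).trans (measure_union_le _ _)
      _ < 2⁻¹ + 2⁻¹ := ENNReal.add_lt_add (measure_two_mul_lintegral_lt_lt_inv_two hX)
        (measure_two_mul_lintegral_lt_lt_inv_two hY)
      _ = 1 := inv_two_add_inv_two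
  exact lt_irrefl 1 this

lemma exists_weighted_sums_le_two_mul {ι : Type*} {s : Finset ι} {w : ι → ℝ}
    {F C : ι → Ω → ℝ} {M K : ℝ≥0∞} (hM : M ≠ ∞) (hK : K ≠ ∞)
    (hw0 : ∀ i ∈ s, 0 ≤ w i) (hw1 : ∑ i ∈ s, w i = 1)
    (hF0 : ∀ i ∈ s, ∀ ω, 0 ≤ F i ω) (hC0 : ∀ i ∈ s, ∀ ω, 0 ≤ C i ω)
    (hFm : ∀ i ∈ s, Measurable (F i)) (hCm : ∀ i ∈ s, Measurable (C i))
    (hFM : ∀ i ∈ s, ∫⁻ ω, ENNReal.ofReal (F i ω) ∂μ ≤ M)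
    (hCK : ∀ i ∈ s, ∫⁻ ω, ENNReal.ofReal (C i ω) ∂μ ≤ K) :
    ∃ ω, ∑ i ∈ s, w i * F i ω ≤ 2 * M.toReal ∧ ∑ i ∈ s, w i * C i ω ≤ 2 * K.toReal := by
  obtain ⟨ω, hFω, hCω⟩ := exists_le_two_mul_lintegral_and_le_two_mul_lintegral (μ := μ)
    (Finset.measurable_sum s fun i hi => (hFm i hi).const_mul (w i)).ennreal_ofReal
    (Finset.measurable_sum s fun i hi => (hCm i hi).const_mul (w i)).ennreal_ofReal
  have hF := hFω.trans (mul_le_mul_right (lintegral_ofReal_weighted_sum_le hw0 hw1 hF0 hFm hFM) 2)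
  have hC := hCω.trans (mul_le_mul_right (lintegral_ofReal_weighted_sum_le hw0 hw1 hC0 hCm hCK) 2)
  rw [ofReal_le_iff_le_toReal (by finiteness), toReal_mul, toReal_ofNat] at hF hC
  exact ⟨ω, hF, hC⟩

end Averaging

theorem statement7_general {A B : Type*} (G : Set (A → B)) (S : (A → B) → ℝ)
    (s : Finset (A → B)) (w : (A → B) → ℝ)
    (hw0 : ∀ f ∈ s, 0 ≤ w f) (hw1 : ∑ f ∈ s, w f = 1) (hsupp : ∀ f ∈ s, f ∈ G)
    (n : ℕ)
    {Ω : Type*} [MeasurableSpace Ω] (P : Measure Ω) [IsProbabilityMeasure P]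
    (ψ : List B → Ω → A) (ν : (A → B) → Ω → ℕ) (φ : List B → Ω → ℝ)
    (hνmeas : ∀ f ∈ G, Measurable (ν f))
    (hSmeas : ∀ f ∈ G, Measurable (fun ω => φ (ranObs f ψ ω (ν f ω)) ω))
    (hcost : ∀ f ∈ G, ∫⁻ ω, (ν f ω : ENNReal) ∂P ≤ n) :
    ∀ δ : ℝ, 0 < δ → ∃ f ∈ G,
      ENNReal.ofReal
        ((1 / 2) *
          sInf {e : ℝ |
            ∃ (ψ' : List B → A) (ν' : (A → B) → ℕ) (φ' : List B → ℝ),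
              (∑ f' ∈ s, w f' * (ν' f' : ℝ)) ≤ 2 * n ∧
              e = ∑ f' ∈ s, w f' * |S f' - φ' (detObs f' ψ' (ν' f'))|} - δ) ≤
      ∫⁻ ω, ENNReal.ofReal |S f - φ (ranObs f ψ ω (ν f ω)) ω| ∂P := by
  intro δ hδ
  obtain ⟨f, hfs, hfmax⟩ := s.exists_max_image
    (fun f => ∫⁻ ω, ENNReal.ofReal |S f - φ (ranObs f ψ ω (ν f ω)) ω| ∂P)
    (nonempty_of_sum_ne_zero (hw1 ▸ one_ne_zero))
  refine ⟨f, hsupp f hfs, ?_⟩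
  set m := ∫⁻ ω, ENNReal.ofReal |S f - φ (ranObs f ψ ω (ν f ω)) ω| ∂P
  rcases eq_or_ne m ∞ with hm | hm
  · exact hm ▸ le_top
  refine (ofReal_le_ofReal (sub_le_self _ hδ.le)).trans (ofReal_le_of_le_toReal ?_)
  obtain ⟨ω, hdet_err, hdet_cost⟩ := exists_weighted_sums_le_two_mul (μ := P)
    (F := fun f' ω => |S f' - φ (ranObs f' ψ ω (ν f' ω)) ω|) (K := n) hm
    (natCast_ne_top n) hw0 hw1 (fun _ _ _ => abs_nonneg _) (fun _ _ _ => Nat.cast_nonneg _)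
    (fun f' hf' => (measurable_const.sub (hSmeas f' (hsupp f' hf'))).abs)
    (fun f' hf' => measurable_from_nat.comp (hνmeas f' (hsupp f' hf'))) hfmax
    (fun f' hf' => by simpa only [ofReal_natCast] using hcost f' (hsupp f' hf'))
  rw [toReal_natCast] at hdet_cost
  calc 1 / 2 * sInf _
      ≤ 1 / 2 * ∑ f' ∈ s, w f' * |S f' - φ (ranObs f' ψ ω (ν f' ω)) ω| := by
        gcongr
        refine csInf_le ⟨0, ?_⟩ ⟨fun l => ψ l ω, fun f' => ν f' ω, fun l => φ l ω, hdet_cost,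
          by simp only [ranObs_eq_detObs]⟩
        rintro e ⟨ψ', ν', φ', -, rfl⟩
        exact sum_nonneg fun f' hf' => mul_nonneg (hw0 f' hf') (abs_nonneg _)
    _ ≤ m.toReal := by linarith

/-- Bakhvalov's averaging principle: let `μ` be a probability measure
with finite support on `𝒢`, represented by a finite set `s ⊆ 𝒢` of functions with
nonnegative weights `w` summing to one.  Define `e_{2n}^det(μ)` as the infimum of the
`μ`-average error over all generalized deterministic algorithms with `μ`-average cost
at most `2n`.  Then every generalized randomized algorithm with cost at most `n` has
worst-case mean error at least `(1/2)·e_{2n}^det(μ)`; the supremum bound is encoded as: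
for every `δ > 0` there is `g ∈ 𝒢` whose mean error (as a lower Lebesgue integral) is
at least `(1/2)·e_{2n}^det(μ) - δ`. -/
theorem statement7 {A B : Type*} (G : Set (A → B)) (hG : G.Nonempty) (S : (A → B) → ℝ)
    (s : Finset (A → B)) (w : (A → B) → ℝ)
    (hw0 : ∀ f ∈ s, 0 ≤ w f) (hw1 : ∑ f ∈ s, w f = 1) (hsupp : ∀ f ∈ s, f ∈ G)
    (n : ℕ) (hn : 0 < n)
    {Ω : Type*} [MeasurableSpace Ω] (P : Measure Ω) [IsProbabilityMeasure P]
    (ψ : List B → Ω → A) (ν : (A → B) → Ω → ℕ) (φ : List B → Ω → ℝ)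
    (hνmeas : ∀ f ∈ G, Measurable (ν f))
    (hSmeas : ∀ f ∈ G, Measurable (fun ω => φ (ranObs f ψ ω (ν f ω)) ω))
    (hcost : ∀ f ∈ G, ∫⁻ ω, (ν f ω : ENNReal) ∂P ≤ n) :
    ∀ δ : ℝ, 0 < δ → ∃ f ∈ G,
      ENNReal.ofReal
        ((1 / 2) *
          sInf {e : ℝ |
            ∃ (ψ' : List B → A) (ν' : (A → B) → ℕ) (φ' : List B → ℝ),
              (∑ f' ∈ s, w f' * (ν' f' : ℝ)) ≤ 2 * n ∧
              e = ∑ f' ∈ s, w f' * |S f' - φ' (detObs f' ψ' (ν' f'))|} - δ) ≤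
      ∫⁻ ω, ENNReal.ofReal |S f - φ (ranObs f ψ ω (ν f ω)) ω| ∂P :=
  statement7_general G S s w hw0 hw1 hsupp n P ψ ν φ hνmeas hSmeas hcost
end

section
/- Let u : [0,∞) → [0,∞) be strictly increasing and continuous with liminf_{x→∞} u(x)/x > 0, let δ ∈ (0,∞) and x_δ ∈ (0,∞) satisfy inf_{x ≥ x_δ} u(x)/x ≥ δ, let κ_δ = (8/√δ)·max(u(x_δ+1), 1), let ζ_u(x) = (∫_0^{x−1} u(y) dy)^{1/2} for x ∈ [1,∞), let n ∈ ℕ, and let α_n = ζ_u^{-1}(κ_δ·(1 + 16·(102n)⁴)/(4·(102n)²)). Then there exists a function v_n ∈ C^∞(ℝ;(0,∞)) such that: (i) v_n is strictly increasing; (ii) v_n(x) ≤ 1 + u(|x|) and v_n'(x) ≤ 1 + u(|x|) for all x ∈ ℝ; (iii) ∫_0^{α_n} ρ3((4·(102n)²/(1 + 16·(102n)⁴))·v_n(x)) dx ≥ ρ3(1)/4. -/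
set_option maxHeartbeats 1000000

open MeasureTheory Real

/-- `ρ3 x = x · exp (-x²)`. -/
noncomputable def rho3 (x : ℝ) : ℝ := x * Real.exp (-x ^ 2)

/-- `ζ_u x = (∫_0^{x-1} u(y) dy)^{1/2}`. -/
noncomputable def zetaU (u : ℝ → ℝ) (x : ℝ) : ℝ :=
  Real.sqrt (∫ y in (0 : ℝ)..(x - 1), u y)

lemma rho3_nonneg {t : ℝ} (h : 0 ≤ t) : 0 ≤ rho3 t :=
  mul_nonneg h (Real.exp_pos _).le


lemma rho3_plateau {t : ℝ} (h1 : 3/4 ≤ t) (h2 : t ≤ 4/5) : rho3 1 ≤ rho3 t := by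
  unfold rho3
  have ht2 : t ^ 2 ≤ 16/25 := by nlinarith
  have he1 : Real.exp (-(16/25)) ≤ Real.exp (-t ^ 2) := Real.exp_le_exp.mpr (by linarith)
  have he2 : Real.exp (-(1:ℝ)) = Real.exp (-(16/25)) * Real.exp (-(9/25)) := by
    rw [← Real.exp_add]; norm_num
  have h34 : (34/25 : ℝ) ≤ Real.exp (9/25) := by
    have := Real.add_one_le_exp (9/25 : ℝ); linarith
  have hprod : Real.exp (-(9/25) : ℝ) * Real.exp (9/25 : ℝ) = 1 := by
    rw [← Real.exp_add]; norm_num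
  have hp1 : (0:ℝ) < Real.exp (-(9/25)) := Real.exp_pos _
  have he3 : Real.exp (-(9/25) : ℝ) ≤ 25/34 := by nlinarith
  have hep : (0:ℝ) < Real.exp (-(16/25)) := Real.exp_pos _
  have key : (1:ℝ) * Real.exp (-(1:ℝ) ^ 2) ≤ (3/4) * Real.exp (-(16/25)) := by
    rw [show (-(1:ℝ)^2) = -(1:ℝ) by norm_num, he2]
    nlinarith
  calc (1:ℝ) * Real.exp (-(1:ℝ)^2) ≤ (3/4) * Real.exp (-(16/25)) := key
    _ ≤ t * Real.exp (-t^2) := by nlinarith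

lemma log_bound1 {Q : ℝ} (hQ : 41616 ≤ Q) : Real.log (32*Q) ≤ Q := by
  have hQ0 : (0:ℝ) < Q := by linarith
  have h32Q : (0:ℝ) < 32*Q := by linarith
  have hs1nn := Real.sqrt_nonneg (32*Q)
  have hs2pos : 0 < Real.sqrt (Real.sqrt (32*Q)) :=
    Real.sqrt_pos.mpr (Real.sqrt_pos.mpr h32Q)
  have hL4 : Real.log (32*Q) ≤ 4 * Real.sqrt (Real.sqrt (32*Q)) := by
    have h1 : Real.log (32*Q) = 4 * Real.log (Real.sqrt (Real.sqrt (32*Q))) := by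
      rw [Real.log_sqrt hs1nn, Real.log_sqrt h32Q.le]; ring
    have h2 := Real.log_le_sub_one_of_pos hs2pos
    rw [h1]; linarith
  have step1 : Real.sqrt (32*Q) ≤ (Q/4)^2 := by
    rw [show (Q/4)^2 = Real.sqrt (((Q/4)^2)^2) from (Real.sqrt_sq (by positivity)).symm]
    apply Real.sqrt_le_sqrt
    nlinarith [mul_le_mul_of_nonneg_right hQ (sq_nonneg Q), sq_nonneg Q, hQ0]
  have step2 : Real.sqrt (Real.sqrt (32*Q)) ≤ Q/4 := by
    rw [show Q/4 = Real.sqrt ((Q/4)^2) from (Real.sqrt_sq (by positivity)).symm]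
    exact Real.sqrt_le_sqrt step1
  linarith

lemma log_bound2 {Q : ℝ} (hQ : 41616 ≤ Q) : 3 * (Real.log (32*Q))^2 ≤ 20 * Q := by
  have hQ0 : (0:ℝ) < Q := by linarith
  have h32Q : (0:ℝ) < 32*Q := by linarith
  have hs1nn := Real.sqrt_nonneg (32*Q)
  have hs2pos : 0 < Real.sqrt (Real.sqrt (32*Q)) :=
    Real.sqrt_pos.mpr (Real.sqrt_pos.mpr h32Q)
  have hL4 : Real.log (32*Q) ≤ 4 * Real.sqrt (Real.sqrt (32*Q)) := by
    have h1 : Real.log (32*Q) = 4 * Real.log (Real.sqrt (Real.sqrt (32*Q))) := by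
      rw [Real.log_sqrt hs1nn, Real.log_sqrt h32Q.le]; ring
    have h2 := Real.log_le_sub_one_of_pos hs2pos
    rw [h1]; linarith
  have hLnn : 0 ≤ Real.log (32*Q) := Real.log_nonneg (by linarith)
  have hsq2 : Real.sqrt (Real.sqrt (32*Q))^2 = Real.sqrt (32*Q) :=
    Real.sq_sqrt hs1nn
  -- (log)² ≤ 16 √(32Q)
  have h16 : (Real.log (32*Q))^2 ≤ 16 * Real.sqrt (32*Q) := by
    nlinarith [hL4, hLnn, hs2pos.le, hsq2]
  -- √(32Q) ≤ 5Q/12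
  have hs : Real.sqrt (32*Q) ≤ 5*Q/12 := by
    rw [show 5*Q/12 = Real.sqrt ((5*Q/12)^2) from (Real.sqrt_sq (by positivity)).symm]
    apply Real.sqrt_le_sqrt
    nlinarith [sq_nonneg Q, hQ0]
  nlinarith [h16, hs]

lemma main_constr
    (u : ℝ → ℝ)
    (hmono : MonotoneOn u (Set.Ici 0))
    (hnonneg : ∀ y ≥ (0:ℝ), 0 ≤ u y)
    (a V K m x₀ B β : ℝ)
    (hβ0 : 0 ≤ β)
    (hx₀0 : 0 ≤ x₀) (hx₀m : x₀ ≤ m)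
    (ha : 0 < a) (ha2 : a ≤ 2/25)
    (hVa : a * V = 19/25)
    (hK1 : 1 ≤ K)
    (hB : B ≤ u x₀)
    (hVB : V ≤ B)
    (hVK : V * K ≤ 4 * B)
    (htail : Real.log (2*(V*K)) ≤ K * (m - x₀))
    (hplat : 5 ≤ K * (β + 1/2 - m)) :
    ∃ v : ℝ → ℝ,
      ContDiff ℝ (⊤ : ℕ∞) v ∧ (∀ x, 0 < v x) ∧
      StrictMono v ∧
      (∀ x, v x ≤ 1 + u |x| ∧ deriv v x ≤ 1 + u |x|) ∧
      rho3 1 / 4 ≤ ∫ x in (0:ℝ)..(β+1), rho3 (a * v x) := by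
  have hV : 0 < V := by nlinarith
  have hK0 : 0 < K := lt_of_lt_of_le one_pos hK1
  have hB0 : 0 < B := lt_of_lt_of_le hV hVB
  set g : ℝ → ℝ := fun x => (1 + Real.exp (K*m - K*x))⁻¹ with hgdef
  set v : ℝ → ℝ := fun x => 1/8 * (π/2 + Real.arctan x) + V * g x with hvdef
  have hEpos : ∀ x : ℝ, 0 < Real.exp (K*m - K*x) := fun x => Real.exp_pos _
  have h1E : ∀ x : ℝ, 0 < 1 + Real.exp (K*m - K*x) := fun x => by linarith [hEpos x]
  have hgpos : ∀ x, 0 < g x := fun x => inv_pos.mpr (h1E x)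
  have hgle1 : ∀ x, g x ≤ 1 := by
    intro x
    rw [hgdef]
    have := h1E x
    have h' : (1 + Real.exp (K*m - K*x))⁻¹ ≤ 1⁻¹ :=
      inv_anti₀ one_pos (by linarith [hEpos x])
    simpa using h'
  -- derivative of g
  have hgd : ∀ x, HasDerivAt g
      (K * Real.exp (K*m - K*x) / (1 + Real.exp (K*m - K*x))^2) x := by
    intro x
    have h1 : HasDerivAt (fun y : ℝ => K*m - K*y) (-K) x := by
      simpa using ((hasDerivAt_id x).const_mul K).const_sub (K*m)
    have h2 := h1.exp
    have h3 := (h2.const_add 1).inv (ne_of_gt (h1E x))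
    refine h3.congr_deriv ?_
    ring
  have hvd : ∀ x, HasDerivAt v
      (1/8 * (1/(1+x^2)) + V * (K * Real.exp (K*m - K*x) / (1 + Real.exp (K*m - K*x))^2)) x := by
    intro x
    exact (((Real.hasDerivAt_arctan x).const_add (π/2)).const_mul (1/8)).add
      ((hgd x).const_mul V)
  have hdveq : ∀ x, deriv v x
      = 1/8 * (1/(1+x^2)) + V * (K * Real.exp (K*m - K*x) / (1 + Real.exp (K*m - K*x))^2) :=
    fun x => (hvd x).deriv
  refine ⟨v, ?_, ?_, ?_, ?_, ?_⟩
  · -- smooth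
    have hg : ContDiff ℝ (⊤ : ℕ∞) g := by
      apply ContDiff.inv
      · exact contDiff_const.add (Real.contDiff_exp.comp
          (contDiff_const.sub (contDiff_const.mul contDiff_id)))
      · exact fun x => ne_of_gt (h1E x)
    exact (contDiff_const.mul (contDiff_const.add Real.contDiff_arctan)).add
      (contDiff_const.mul hg)
  · -- positive
    intro x
    have h1 := Real.neg_pi_div_two_lt_arctan x
    have h2 := mul_pos hV (hgpos x)
    have := Real.pi_pos
    simp only [hvdef]
    nlinarith
  · -- strict mono
    intro x y hxy
    have h1 : Real.arctan x < Real.arctan y := Real.arctan_strictMono hxy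
    have h2 : g x ≤ g y := by
      rw [hgdef]
      have hle : Real.exp (K*m - K*y) ≤ Real.exp (K*m - K*x) :=
        Real.exp_le_exp.mpr (by nlinarith)
      exact inv_anti₀ (h1E y) (by linarith)
    have h3 : V * g x ≤ V * g y := mul_le_mul_of_nonneg_left h2 hV.le
    simp only [hvdef]
    nlinarith
  · -- bounds
    intro x
    have hπ := Real.pi_le_four
    have hπ0 := Real.pi_pos
    have harc1 := Real.neg_pi_div_two_lt_arctan x
    have harc2 := Real.arctan_lt_pi_div_two x
    have hs : 1/8 * (π/2 + Real.arctan x) ≤ 1/2 := by nlinarith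
    have hs0 : 0 ≤ 1/8 * (π/2 + Real.arctan x) := by nlinarith
    have hd1 : 1/8 * (1/(1+x^2)) ≤ 1/8 := by
      have h1 : (0:ℝ) < 1 + x^2 := by positivity
      have : 1/(1+x^2) ≤ 1 := by rw [div_le_one h1]; nlinarith
      linarith
    have hd0 : (0:ℝ) ≤ 1/(1+x^2) := by positivity
    set E := Real.exp (K*m - K*x) with hEdef
    have hE0 : 0 < E := hEpos x
    rcases le_or_gt x x₀ with hx | hx
    · -- left region
      have hEbig : 2*(V*K) ≤ E := by
        have hlog : Real.log (2*(V*K)) ≤ K*m - K*x := by nlinarith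
        have := Real.exp_le_exp.mpr hlog
        rwa [Real.exp_log (by positivity)] at this
      have hVg : V * g x ≤ 1/2 := by
        have hg' : g x ≤ (2*(V*K))⁻¹ := by
          rw [hgdef]
          exact inv_anti₀ (by positivity) (by linarith)
        have h2 : V * g x ≤ V * (2*(V*K))⁻¹ := mul_le_mul_of_nonneg_left hg' hV.le
        have h3 : V * (2*(V*K))⁻¹ = 1/(2*K) := by field_simp
        rw [h3] at h2
        have h4 : (1:ℝ)/(2*K) ≤ 1/2 := by
          apply one_div_le_one_div_of_le (by norm_num)
          linarith
        linarith
      have hu0 : 0 ≤ u |x| := hnonneg _ (abs_nonneg x)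
      constructor
      · simp only [hvdef]; nlinarith
      · rw [hdveq x, ← hEdef]
        have hder : V * (K * E / (1+E)^2) ≤ 1/2 := by
          rw [show V * (K * E / (1+E)^2) = (V*K*E)/(1+E)^2 by ring,
            div_le_iff₀ (by positivity)]
          nlinarith [mul_le_mul_of_nonneg_right hEbig hE0.le, hE0, hV, hK0]
        linarith
    · -- right region
      have hxx : |x| = x := abs_of_nonneg (le_trans hx₀0 hx.le)
      have huB : B ≤ u x := le_trans hB (hmono hx₀0 (le_trans hx₀0 hx.le) hx.le)
      constructor
      · have : V * g x ≤ V := by nlinarith [hgle1 x, hgpos x]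
        simp only [hvdef]
        rw [hxx]
        nlinarith
      · rw [hdveq x, ← hEdef, hxx]
        have hder : V * (K * E / (1+E)^2) ≤ B := by
          rw [show V * (K * E / (1+E)^2) = (V*K*E)/(1+E)^2 by ring,
            div_le_iff₀ (by positivity)]
          nlinarith [sq_nonneg (1-E)]
        linarith
  · -- integral bound
    have hvcont : Continuous v := by
      apply Continuous.add
      · exact continuous_const.mul (continuous_const.add Real.continuous_arctan)
      · apply continuous_const.mul
        apply Continuous.inv₀
        · exact continuous_const.add (Real.continuous_exp.comp
            (continuous_const.sub (continuous_const.mul continuous_id)))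
        · exact fun x => ne_of_gt (h1E x)
    have hrho : Continuous fun x => rho3 (a * v x) := by
      unfold rho3
      exact (continuous_const.mul hvcont).mul
        ((Real.continuous_exp.comp (continuous_neg.comp
          ((continuous_const.mul hvcont).pow 2))))
    have hvpos : ∀ x, 0 < v x := by
      intro x
      have h1 := Real.neg_pi_div_two_lt_arctan x
      have h2 := mul_pos hV (hgpos x)
      have := Real.pi_pos
      simp only [hvdef]
      nlinarith
    have hfnn : ∀ x, 0 ≤ rho3 (a * v x) :=
      fun x => rho3_nonneg (mul_nonneg ha.le (hvpos x).le)
    have hi1 : IntervalIntegrable (fun x => rho3 (a * v x)) volume 0 (β+1/2) :=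
      hrho.intervalIntegrable _ _
    have hi2 : IntervalIntegrable (fun x => rho3 (a * v x)) volume (β+1/2) (β+3/4) :=
      hrho.intervalIntegrable _ _
    have hi3 : IntervalIntegrable (fun x => rho3 (a * v x)) volume (β+3/4) (β+1) :=
      hrho.intervalIntegrable _ _
    have hi23 : IntervalIntegrable (fun x => rho3 (a * v x)) volume (β+1/2) (β+1) :=
      hrho.intervalIntegrable _ _
    have hsplit2 := intervalIntegral.integral_add_adjacent_intervals hi2 hi3
    have hsplit1 := intervalIntegral.integral_add_adjacent_intervals hi1 hi23
    have hnn1 : 0 ≤ ∫ x in (0:ℝ)..(β+1/2), rho3 (a * v x) :=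
      intervalIntegral.integral_nonneg (by linarith) (fun t _ => hfnn t)
    have hnn3 : 0 ≤ ∫ x in (β+3/4)..(β+1), rho3 (a * v x) :=
      intervalIntegral.integral_nonneg (by linarith) (fun t _ => hfnn t)
    have hmid : rho3 1 * (1/4) ≤ ∫ x in (β+1/2)..(β+3/4), rho3 (a * v x) := by
      have hbd : ∀ x ∈ Set.Icc (β+1/2) (β+3/4), rho3 1 ≤ rho3 (a * v x) := by
        intro x hx
        apply rho3_plateau
        · -- 3/4 ≤ a * v x
          have hE : Real.exp (K*m - K*x) ≤ Real.exp (-5 : ℝ) := by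
            apply Real.exp_le_exp.mpr
            have hx1 : β + 1/2 ≤ x := hx.1
            nlinarith
          have hexp5 : Real.exp (-5:ℝ) ≤ 1/100 := by
            rw [Real.exp_neg]
            have h27 : (2.7182818283 : ℝ) < Real.exp 1 := Real.exp_one_gt_d9
            have h100 : ((100:ℝ)) ≤ Real.exp 5 :=
              calc ((100:ℝ)) ≤ (2.7182818283:ℝ)^(5:ℕ) := by norm_num
                _ ≤ (Real.exp 1)^(5:ℕ) := by
                    apply pow_le_pow_left₀ (by norm_num) h27.le
                _ = Real.exp 5 := by
                    rw [← Real.exp_nat_mul]; norm_num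
            rw [inv_le_comm₀ (Real.exp_pos _) (by norm_num)]
            calc ((1:ℝ)/100)⁻¹ = 100 := by norm_num
              _ ≤ Real.exp 5 := h100
          have hg5 : (100:ℝ)/101 ≤ g x := by
            rw [hgdef]
            have h1 : 1 + Real.exp (K*m - K*x) ≤ 101/100 := by
              have := le_trans hE hexp5; linarith
            calc (100:ℝ)/101 = (101/100)⁻¹ := by norm_num
              _ ≤ (1 + Real.exp (K*m - K*x))⁻¹ := inv_anti₀ (h1E x) h1
          have harc1 := Real.neg_pi_div_two_lt_arctan x
          have hπ0 := Real.pi_pos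
      -- a * v x ≥ a * V * g x ≥ (19/25)*(100/101)
          have h2 : a * v x ≥ (19/25) * (100/101) := by
            simp only [hvdef]
            have hs0 : 0 ≤ 1/8 * (π/2 + Real.arctan x) := by nlinarith
            have : a * (V * g x) ≥ (19/25) * (100/101) := by
              rw [← mul_assoc, hVa]
              nlinarith
            nlinarith
          linarith [h2]
        · -- a * v x ≤ 4/5
          have hπ := Real.pi_le_four
          have harc2 := Real.arctan_lt_pi_div_two x
          have hπ0 := Real.pi_pos
          have hs : 1/8 * (π/2 + Real.arctan x) ≤ 1/2 := by nlinarith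
          have hVg : V * g x ≤ V := by nlinarith [hgle1 x, hgpos x]
          have h3 : a * (V * g x) ≤ 19/25 := by
            calc a * (V * g x) ≤ a * V := by nlinarith [hgle1 x, hgpos x]
              _ = 19/25 := hVa
          have hvx : v x ≤ 1/2 + V * g x := by simp only [hvdef]; nlinarith
          have : a * v x ≤ a * (1/2 + V * g x) := by nlinarith [hvpos x]
          calc a * v x ≤ a * (1/2) + a * (V * g x) := by nlinarith
            _ ≤ (2/25) * (1/2) + 19/25 := by nlinarith
            _ = 4/5 := by norm_num
      have := intervalIntegral.integral_mono_on (by linarith : β+1/2 ≤ β+3/4)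
        (intervalIntegrable_const) hi2 hbd
      rw [intervalIntegral.integral_const] at this
      have heq : (β+3/4 - (β+1/2)) • rho3 1 = rho3 1 * (1/4) := by
        rw [smul_eq_mul]; ring
      linarith [heq ▸ this]
    have : rho3 1 / 4 ≤ (∫ x in (β+1/2)..(β+3/4), rho3 (a*v x)) := by linarith
    linarith [hsplit1, hsplit2, hnn1, hnn3, hmid]

/-- for `u : [0,∞) → [0,∞)` strictly increasing and continuous with
`liminf_{x→∞} u(x)/x > 0`, `δ, x_δ > 0` with `u(x)/x ≥ δ` for `x ≥ x_δ`,
`κ_δ = (8/√δ)·max(u(x_δ+1),1)`, `n ∈ ℕ` and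
`α_n = ζ_u⁻¹(κ_δ·(1+16(102n)⁴)/(4(102n)²))` (encoded by `α ≥ 1` with
`ζ_u α = κ_δ·(1+16(102n)⁴)/(4(102n)²)`), there exists `v ∈ C^∞(ℝ;(0,∞))` which is
strictly increasing, satisfies `v(x) ≤ 1+u|x|` and `v'(x) ≤ 1+u|x|`, and
`∫_0^{α_n} ρ3((4(102n)²/(1+16(102n)⁴))·v x) dx ≥ ρ3(1)/4`. -/
theorem statement11
    (u : ℝ → ℝ)
    (hmono : StrictMonoOn u (Set.Ici 0)) (hcont : ContinuousOn u (Set.Ici 0))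
    (hnonneg : ∀ y ≥ (0:ℝ), 0 ≤ u y)
    (hliminf : ∃ c > (0:ℝ), ∃ x0 : ℝ, ∀ x ≥ x0, c ≤ u x / x)
    (δ : ℝ) (hδ : 0 < δ) (xδ : ℝ) (hxδ : 0 < xδ)
    (hinf : ∀ x ≥ xδ, δ ≤ u x / x)
    (n : ℕ) (hn : 0 < n)
    (α : ℝ) (hα1 : 1 ≤ α)
    (hα : zetaU u α =
      8 / Real.sqrt δ * max (u (xδ + 1)) 1 *
        ((1 + 16 * (102 * (n : ℝ)) ^ 4) / (4 * (102 * (n : ℝ)) ^ 2))) :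
    ∃ v : ℝ → ℝ,
      ContDiff ℝ (⊤ : ℕ∞) v ∧ (∀ x, 0 < v x) ∧
      StrictMono v ∧
      (∀ x, v x ≤ 1 + u |x| ∧ deriv v x ≤ 1 + u |x|) ∧
      rho3 1 / 4 ≤
        ∫ x in (0 : ℝ)..α,
          rho3 (4 * (102 * (n : ℝ)) ^ 2 / (1 + 16 * (102 * (n : ℝ)) ^ 4) * v x) := by
  have hn1 : (1:ℝ) ≤ (n:ℝ) := by exact_mod_cast hn
  set N : ℝ := 102 * (n:ℝ) with hNdef
  have hN102 : 102 ≤ N := by rw [hNdef]; linarith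
  have hN2 : (0:ℝ) < 4 * N ^ 2 := by positivity
  have hden : (0:ℝ) < 1 + 16 * N ^ 4 := by positivity
  set Q : ℝ := (1 + 16 * N ^ 4) / (4 * N ^ 2) with hQdef
  have hQ4 : 4 * N ^ 2 ≤ Q := by
    rw [hQdef, le_div_iff₀ hN2]; nlinarith [sq_nonneg N, sq_nonneg (N^2)]
  have hQbig : 41616 ≤ Q := by
    nlinarith [mul_le_mul_of_nonneg_left hN102 (by linarith : (0:ℝ) ≤ N), hN102]
  have hQ0 : (0:ℝ) < Q := by linarith
  set a : ℝ := 4 * N ^ 2 / (1 + 16 * N ^ 4) with hadef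
  have ha0 : 0 < a := by rw [hadef]; positivity
  have haQ : a * Q = 1 := by
    rw [hadef, hQdef]; field_simp
  have ha2 : a ≤ 2/25 := by
    have h1 : a = 1/Q := by
      field_simp
      linarith [haQ]
    rw [h1, div_le_div_iff₀ hQ0 (by norm_num)]
    linarith
  set M : ℝ := max (u (xδ + 1)) 1 with hMdef
  have hM1 : 1 ≤ M := le_max_right _ _
  have hMδ : δ * (xδ + 1) ≤ M := by
    have h1 := hinf (xδ + 1) (by linarith)
    have h2 : δ * (xδ + 1) ≤ u (xδ + 1) := by
      rw [le_div_iff₀ (by linarith)] at h1; linarith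
    exact le_trans h2 (le_max_left _ _)
  have hδM : δ ≤ M := by nlinarith [mul_nonneg hδ.le hxδ.le]
  have hδM2 : δ ≤ M ^ 2 := by
    nlinarith [mul_nonneg (by linarith : (0:ℝ) ≤ M - 1) (by linarith : (0:ℝ) ≤ M)]
  set β : ℝ := α - 1 with hβdef
  have hβ0 : 0 ≤ β := by rw [hβdef]; linarith
  have hint0 : 0 ≤ ∫ y in (0:ℝ)..β, u y :=
    intervalIntegral.integral_nonneg hβ0 (fun y hy => hnonneg y hy.1)
  have hzeta : Real.sqrt (∫ y in (0:ℝ)..β, u y) = 8 / Real.sqrt δ * M * Q := by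
    rw [← hα]; rfl
  have hsδ : Real.sqrt δ ^ 2 = δ := Real.sq_sqrt hδ.le
  have hsδ0 : 0 < Real.sqrt δ := Real.sqrt_pos.mpr hδ
  have hTint : ∫ y in (0:ℝ)..β, u y = 64 * M^2 * Q^2 / δ := by
    have h1 := Real.sq_sqrt hint0
    rw [hzeta] at h1
    rw [← h1]
    field_simp
    rw [hsδ]; ring
  have h32Q : (0:ℝ) < 32 * Q := by linarith
  set L : ℝ := Real.log (32 * Q) with hLdef
  have hL1 : 1 ≤ L := by
    rw [hLdef, Real.le_log_iff_exp_le h32Q]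
    have := Real.exp_one_lt_d9
    linarith
  have hL0 : 0 < L := by linarith
  have hLQ : L ≤ Q := by rw [hLdef]; exact log_bound1 hQbig
  have hL2 : 3 * L^2 ≤ 20 * Q := by rw [hLdef]; exact log_bound2 hQbig
  have hmono' : MonotoneOn u (Set.Ici 0) := hmono.monotoneOn
  have hVQ : 19/25/a = 19/25 * Q := by
    rw [eq_comm, mul_comm, eq_div_iff ha0.ne']
    linarith [haQ]
  have hVa : a * (19/25/a) = 19/25 := by
    field_simp
  clear_value N Q a M β L
  have hgoal : ∀ v : ℝ → ℝ,
      (rho3 1 / 4 ≤ ∫ x in (0:ℝ)..(β+1), rho3 (a * v x)) →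
      (rho3 1 / 4 ≤ ∫ x in (0:ℝ)..α, rho3 (a * v x)) := by
    intro v h
    have hba : β + 1 = α := by rw [hβdef]; ring
    rwa [hba] at h
  by_cases hcase : L ≤ β ∧ 2*Q ≤ u (β - L)
  · -- Case A : slow growth, plenty of room before β
    obtain ⟨hLβ, h2Q⟩ := hcase
    obtain ⟨v, h1, h2, h3, h4, h5⟩ :=
      main_constr u hmono' hnonneg a (19/25/a) 10 (β - L/2) (β - L) (2*Q) β
        hβ0 (by linarith) (by linarith) ha0 ha2 hVa (by norm_num)
        h2Q
        (by rw [hVQ]; linarith [hQ0])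
        (by rw [hVQ]; linarith [hQ0])
        (by
          rw [hVQ, show (2:ℝ)*((19/25*Q)*10) = 152/10*Q by ring]
          have hh1 : Real.log (152/10*Q) ≤ Real.log (32*Q) :=
            Real.log_le_log (by linarith) (by linarith)
          rw [← hLdef] at hh1
          linarith [hh1, hL1])
        (by linarith [hL0])
    exact ⟨v, h1, h2, h3, h4, hgoal v h5⟩
  · -- Case B : steep growth right before β
    push_neg at hcase
    have hub : 32 * Q^2 / L ≤ u β := by
      rw [div_le_iff₀ hL0]
      rcases le_or_gt L β with hLβ | hβL
      · have h2Q := hcase hLβ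
        have hβL0 : 0 ≤ β - L := by linarith
        have hiu1 : IntervalIntegrable u volume 0 (β - L) := by
          apply ContinuousOn.intervalIntegrable
          apply hcont.mono
          rw [Set.uIcc_of_le hβL0]
          exact fun y hy => hy.1
        have hiu2 : IntervalIntegrable u volume (β - L) β := by
          apply ContinuousOn.intervalIntegrable
          apply hcont.mono
          rw [Set.uIcc_of_le (by linarith : β - L ≤ β)]
          exact fun y hy => le_trans hβL0 hy.1
        have hsplit := intervalIntegral.integral_add_adjacent_intervals hiu1 hiu2
        have e1 : ∫ y in (0:ℝ)..(β-L), u y ≤ (β - L) * (2*Q) := by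
          have hstep := intervalIntegral.integral_mono_on hβL0 hiu1
            (intervalIntegrable_const (c := 2*Q))
            (fun y hy => by
              have := hmono' hy.1 hβL0 hy.2
              linarith)
          rw [intervalIntegral.integral_const, smul_eq_mul] at hstep
          linarith
        have e2 : ∫ y in (β-L)..β, u y ≤ L * u β := by
          have hstep := intervalIntegral.integral_mono_on (by linarith : β - L ≤ β) hiu2
            (intervalIntegrable_const (c := u β))
            (fun y hy => hmono' (le_trans hβL0 hy.1) hβ0 hy.2)
          rw [intervalIntegral.integral_const, smul_eq_mul] at hstep
          calc ∫ y in (β-L)..β, u y ≤ (β - (β - L)) * u β := hstep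
            _ = L * u β := by ring
        by_cases hβs : β ≤ 16 * M^2 * Q / δ
        · rw [le_div_iff₀ hδ] at hβs
          have hq1 : 2 * Q * β * δ ≤ 32 * M^2 * Q^2 := by
            linarith [mul_le_mul_of_nonneg_left hβs (by positivity : (0:ℝ) ≤ 2*Q)]
          have hq2 : 32 * Q^2 * δ ≤ 32 * M^2 * Q^2 := by
            linarith [mul_le_mul_of_nonneg_left hδM2 (by positivity : (0:ℝ) ≤ 32*Q^2)]
          have hsum : 64 * M^2 * Q^2 / δ ≤ (β - L) * (2*Q) + L * u β := by
            rw [← hTint, ← hsplit]; linarith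
          have hsum2 : 64 * M^2 * Q^2 ≤ ((β - L) * (2*Q) + L * u β) * δ := by
            rw [div_le_iff₀ hδ] at hsum; linarith
          have hkey : 32*Q^2*δ ≤ (u β * L) * δ := by
            linarith [hsum2, hq1, hq2,
              mul_nonneg (mul_nonneg hQ0.le hL0.le) hδ.le]
          exact le_of_mul_le_mul_right hkey hδ
        · exfalso
          push_neg at hβs
          rw [div_lt_iff₀ hδ] at hβs
          have hb1 : 16*M*Q*(δ*(xδ+1)) ≤ 16*M*Q*M :=
            mul_le_mul_of_nonneg_left hMδ (by positivity)
          have hb3 : δ*(16*M*Q*(xδ+1)) < δ*β := by linarith [hb1, hβs]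
          have hb4 : 16*M*Q*(xδ+1) < β := lt_of_mul_lt_mul_left hb3 hδ.le
          have hMQ1 : (41616:ℝ) ≤ M*Q := by
            have h := mul_le_mul_of_nonneg_left hQbig (by linarith : (0:ℝ) ≤ M)
            linarith [h, hM1]
          have hc1 : xδ ≤ 16*M*Q*xδ := by
            have h := mul_le_mul_of_nonneg_right
              (by linarith [hMQ1] : (1:ℝ) ≤ 16*(M*Q)) hxδ.le
            linarith [h]
          have hc2 : Q ≤ 16*M*Q := by
            have h := mul_le_mul_of_nonneg_right hM1 hQ0.le
            linarith [h, hMQ1]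
          have hβxδ : xδ ≤ β - L := by linarith [hb4, hc1, hc2, hLQ]
          have hβLpos : 0 < β - L := by linarith
          have h3 := hinf (β - L) hβxδ
          rw [le_div_iff₀ hβLpos] at h3
          have hd1 : δ*L ≤ M*Q := mul_le_mul hδM hLQ hL0.le (by linarith)
          have hd2 : 15*Q ≤ 16*M^2*Q - M*Q := by
            linarith [mul_nonneg (by linarith : (0:ℝ) ≤ M - 1) hQ0.le,
              mul_nonneg (mul_nonneg (by linarith : (0:ℝ) ≤ M - 1)
                (by linarith : (0:ℝ) ≤ M)) hQ0.le]
          -- u(β-L) ≥ δ(β-L) = δβ - δL > 16M²Q - MQ ≥ 15Q ≥ 2Q, contra h2Q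
          linarith [h3, hβs, hd1, hd2, hcase hLβ, hQ0]
      · -- β < L
        have hiu : IntervalIntegrable u volume 0 β := by
          apply ContinuousOn.intervalIntegrable
          apply hcont.mono
          rw [Set.uIcc_of_le hβ0]
          exact fun y hy => hy.1
        have e1 : ∫ y in (0:ℝ)..β, u y ≤ β * u β := by
          have hstep := intervalIntegral.integral_mono_on hβ0 hiu
            (intervalIntegrable_const (c := u β))
            (fun y hy => hmono' hy.1 hβ0 hy.2)
          rw [intervalIntegral.integral_const, smul_eq_mul] at hstep
          linarith
        have huβ : 0 ≤ u β := hnonneg β hβ0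
        have hq2 : 64 * Q^2 ≤ 64 * M^2 * Q^2 / δ := by
          rw [le_div_iff₀ hδ]
          linarith [mul_le_mul_of_nonneg_left hδM2 (by positivity : (0:ℝ) ≤ 64*Q^2)]
        linarith [hTint, e1, huβ, hq2,
          mul_nonneg (by linarith : (0:ℝ) ≤ L - β) huβ, sq_nonneg Q]
    obtain ⟨v, h1, h2, h3, h4, h5⟩ :=
      main_constr u hmono' hnonneg a (19/25/a) (160*Q/L) (β + 1/8) β (32*Q^2/L) β
        hβ0 hβ0 (by linarith) ha0 ha2 hVa
        (by rw [le_div_iff₀ hL0]; linarith [hLQ, hQ0])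
        hub
        (by rw [hVQ, le_div_iff₀ hL0]
            linarith [mul_le_mul_of_nonneg_left hLQ (by positivity : (0:ℝ) ≤ 19/25*Q),
              sq_nonneg Q])
        (by rw [hVQ,
              show (19/25*Q) * (160*Q/L) = 608*Q^2/5/L by ring,
              show (4:ℝ) * (32*Q^2/L) = 128*Q^2/L by ring,
              div_le_div_iff₀ hL0 hL0]
            linarith [mul_nonneg (sq_nonneg Q) hL0.le])
        (by
          rw [hVQ, show (2:ℝ)*((19/25*Q) * (160*Q/L)) = 1216/5*Q^2/L by ring]
          have hargle : 1216/5*Q^2/L ≤ Q^3 := by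
            rw [div_le_iff₀ hL0]
            have hQ3L : Q^3 * 1 ≤ Q^3 * L :=
              mul_le_mul_of_nonneg_left hL1 (le_of_lt (pow_pos hQ0 3))
            have hQQ2 : 41616*Q^2 ≤ Q^3 := by
              have h := mul_le_mul_of_nonneg_right hQbig (sq_nonneg Q)
              calc (41616:ℝ)*Q^2 ≤ Q*Q^2 := h
                _ = Q^3 := by ring
            linarith [hQ3L, hQQ2, sq_nonneg Q]
          have hlog1 : Real.log (1216/5*Q^2/L) ≤ Real.log (Q^3) :=
            Real.log_le_log (by positivity) hargle
          have hlog2 : Real.log (Q^3) = 3 * Real.log Q := by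
            rw [Real.log_pow]; norm_num
          have hlog3 : Real.log Q ≤ L := by
            rw [hLdef]
            exact Real.log_le_log hQ0 (by linarith)
          have htarget : 3 * L ≤ (160*Q/L) * (β + 1/8 - β) := by
            rw [show (160*Q/L) * (β + 1/8 - β) = 20*Q/L by ring, le_div_iff₀ hL0]
            linarith [hL2]
          linarith)
        (by
          rw [show (160*Q/L) * (β + 1/2 - (β + 1/8)) = 60*Q/L by ring, le_div_iff₀ hL0]
          linarith [hLQ, hQ0])
    exact ⟨v, h1, h2, h3, h4, hgoal v h5⟩
end
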